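/- Let M := max_{x∈V} d_x^{-1/2}. For every λ > 0 and all x, y ∈ V, one has 0 ≤ KD_λ(x,y) ≤ 2λ·vol(V)^{1/2}·M + d(x,y); in particular KD_λ(x,y) is finite. -/

import Mathlib

open scoped BigOperators

noncomputable section

namespace HypRicci

variable {V : Type*} [Fintype V] [DecidableEq V]

/-- A finite weighted hypergraph on vertex set `V`: a finite set of nonempty
hyperedges together with positive weights. -/
structure Hypergraph (V : Type*) [Fintype V] [DecidableEq V] : Type _ where
  E : Finset (Finset V)
  w : Finset V → ℝ
  w_pos : ∀ e ∈ E, 0 < w e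
  e_nonempty : ∀ e ∈ E, e.Nonempty

/-- Degree `d_x = ∑_{e ∋ x} w(e)`. -/
def deg (H : Hypergraph V) (x : V) : ℝ := ∑ e ∈ H.E, if x ∈ e then H.w e else 0

/-- Volume `vol(V) = ∑_x d_x`. -/
def vol (H : Hypergraph V) : ℝ := ∑ x, deg H x

/-- Weighted inner product `⟨f,g⟩ = ∑_x f(x) g(x) / d_x`. -/
def inn (H : Hypergraph V) (f g : V → ℝ) : ℝ := ∑ x, f x * g x / deg H x

/-- Norm associated to `inn`. -/
def nrm (H : Hypergraph V) (f : V → ℝ) : ℝ := Real.sqrt (inn H f f)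

/-- Indicator function `δ_x`. -/
def delta (x : V) : V → ℝ := fun z => if z = x then 1 else 0

/-- Standard (unweighted) dot product `u^⊤ v`. -/
def dot (u v : V → ℝ) : ℝ := ∑ x, u x * v x

/-- Base polytope `B_e = conv{δ_x − δ_y : x,y ∈ e}`. -/
def Bp (e : Finset V) : Set (V → ℝ) :=
  convexHull ℝ {b : V → ℝ | ∃ x ∈ e, ∃ y ∈ e, b = delta x - delta y}

/-- The multivalued hypergraph Laplacian
`L(f) = {∑_e w(e) (b_e^⊤ f) b_e : b_e ∈ argmax_{b ∈ B_e} b^⊤ f}`. -/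
def Lap (H : Hypergraph V) (f : V → ℝ) : Set (V → ℝ) :=
  { g | ∃ b : Finset V → (V → ℝ),
      (∀ e ∈ H.E, b e ∈ Bp e ∧ ∀ b' ∈ Bp e, dot b' f ≤ dot (b e) f) ∧
      g = ∑ e ∈ H.E, (H.w e * dot (b e) f) • b e }

/-- `D⁻¹ f`. -/
def Dinv (H : Hypergraph V) (f : V → ℝ) : V → ℝ := fun x => f x / deg H x

/-- Normalized Laplacian `𝓛(f) = L(D⁻¹ f)`. -/
def NL (H : Hypergraph V) (f : V → ℝ) : Set (V → ℝ) := Lap H (Dinv H f)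

/-- The resolvent `J_λ = (I + λ𝓛)⁻¹`: it sends `f` to the (unique) `g` with
`f ∈ g + λ 𝓛(g)`. -/
def Resolvent (H : Hypergraph V) (l : ℝ) (f : V → ℝ) : V → ℝ :=
  Classical.epsilon fun g => ∃ h ∈ NL H g, f = g + l • h

/-- Adjacency: `x ∼ y` iff some hyperedge contains both. -/
def Adj (H : Hypergraph V) (x y : V) : Prop := ∃ e ∈ H.E, x ∈ e ∧ y ∈ e

/-- There is a chain of length `n` of successively adjacent vertices from `x` to `y`. -/
def chainProp (H : Hypergraph V) (x y : V) (n : ℕ) : Prop :=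
  ∃ z : ℕ → V, z 0 = x ∧ z n = y ∧ ∀ i < n, Adj H (z i) (z (i + 1))

/-- Connectedness of the hypergraph. -/
def Connected (H : Hypergraph V) : Prop := ∀ x y : V, ∃ n, chainProp H x y n

/-- Graph distance (as a natural number). -/
def hdistN (H : Hypergraph V) (x y : V) : ℕ := sInf {n | chainProp H x y n}

/-- Graph distance `d(x,y)` as a real number. -/
def gdist (H : Hypergraph V) (x y : V) : ℝ := (hdistN H x y : ℝ)

/-- Diameter `diam(H) = max_{x,y} d(x,y)`. -/
def hdiam (H : Hypergraph V) : ℝ :=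
  (((Finset.univ : Finset (V × V)).sup fun p => hdistN H p.1 p.2 : ℕ) : ℝ)

/-- Weighted `1`-Lipschitz functions: `⟨f, δ_x − δ_y⟩ ≤ d(x,y)` for all `x, y`. -/
def Lip1 (H : Hypergraph V) : Set (V → ℝ) :=
  { f | ∀ x y : V, inn H f (delta x - delta y) ≤ gdist H x y }

/-- The `λ`-nonlinear Kantorovich difference. -/
def KD (H : Hypergraph V) (l : ℝ) (x y : V) : ℝ :=
  sSup { r | ∃ f ∈ Lip1 H, r = inn H (Resolvent H l f) (delta x - delta y) }

/-- `κ_λ(x,y) = 1 − KD_λ(x,y)/d(x,y)`. -/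
def kappa (H : Hypergraph V) (l : ℝ) (x y : V) : ℝ := 1 - KD H l x y / gdist H x y

/-- Lower coarse Ricci curvature `κ̲(x,y) = liminf_{λ↓0} κ_λ(x,y)/λ`. -/
def kappaLower (H : Hypergraph V) (x y : V) : EReal :=
  Filter.liminf (fun l : ℝ => ((kappa H l x y / l : ℝ) : EReal)) (nhdsWithin 0 (Set.Ioi 0))

/-- Upper coarse Ricci curvature `κ̄(x,y) = limsup_{λ↓0} κ_λ(x,y)/λ`. -/
def kappaUpper (H : Hypergraph V) (x y : V) : EReal :=
  Filter.limsup (fun l : ℝ => ((kappa H l x y / l : ℝ) : EReal)) (nhdsWithin 0 (Set.Ioi 0))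

/-- Canonical restriction `𝓛⁰ f`: the unique element of minimal norm of `𝓛(f)`. -/
def L0 (H : Hypergraph V) (f : V → ℝ) : V → ℝ :=
  Classical.epsilon fun g => g ∈ NL H f ∧ ∀ h ∈ NL H f, nrm H g ≤ nrm H h

/-- The stationary distribution `π(x) = d_x / vol(V)`. -/
def piH (H : Hypergraph V) : V → ℝ := fun x => deg H x / vol H

/-- The energy `Q(h) = (1/2) ∑_e w(e) max_{x,y ∈ e} (h(x) − h(y))²`. -/
def Qform (H : Hypergraph V) (h : V → ℝ) : ℝ :=
  (1 / 2) * ∑ e ∈ H.E, H.w e * sSup { r | ∃ x ∈ e, ∃ y ∈ e, r = (h x - h y) ^ 2 }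


end HypRicci

/-!
The Laplacian is monotone: `(h - h') ⬝ᵥ (u - u') ≥ 0` for `h ∈ L u`, `h' ∈ L u'`. Hence the
resolvent equation `f = g + λ h`, `h ∈ 𝓛 g`, has at most one solution. It has one because a
minimizer `u` of `∑_z d_z (u_z - a_z)² + ∑_e w(e) (max_{b ∈ B_e} b ⬝ᵥ u)²` satisfies
`D (a - u) ∈ L u`: the one-sided directional derivatives at `u` show that `D (a - u)` passes every
linear test against the polytope `∑_e w(e) (max_{B_e} · ⬝ᵥ u) • conv {active vertices of B_e}`,
so it lies in that polytope by Hahn–Banach. In particular `J_λ 0 = 0`, whence `KD_λ ≥ 0`.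

For `f` weighted 1-Lipschitz write `J_λ f = f - λ h` with `h ∈ 𝓛 (J_λ f)`. Monotonicity against any
`h₀ ∈ 𝓛 f` gives `‖h‖ ≤ ‖h₀‖`, and `|h₀ z| ≤ d_z` because `max_{B_e} · ⬝ᵥ D⁻¹ f ∈ [0, 1]` on
every edge, so `‖h‖² ≤ vol V`. Finally `|⟨h, δ_z⟩| = |h z| / d_z ≤ ‖h‖ d_z^{-1/2}` at `z = x, y`.
-/

open Filter Topology Matrix

lemma Finset.exists_eventually_sup'_add_mul {ι : Type*} {s : Finset ι} (hs : s.Nonempty)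
    (a b : ι → ℝ) :
    ∃ j ∈ s, a j = s.sup' hs a ∧
      ∀ᶠ t in 𝓝[>] (0 : ℝ), s.sup' hs (fun i => a i + t * b i) = s.sup' hs a + t * b j := by
  set A := s.filter fun i => a i = s.sup' hs a
  have hA : A.Nonempty := by
    obtain ⟨i, hi, hia⟩ := s.exists_mem_eq_sup' hs a
    exact ⟨i, Finset.mem_filter.2 ⟨hi, hia.symm⟩⟩
  obtain ⟨j, hjA, hbj⟩ := A.exists_mem_eq_sup' hA b
  obtain ⟨hjs, haj⟩ := Finset.mem_filter.1 hjA
  refine ⟨j, hjs, haj, ?_⟩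
  have hle : ∀ i ∈ s, ∀ᶠ t in 𝓝[>] (0 : ℝ), a i + t * b i ≤ s.sup' hs a + t * b j := by
    intro i hi
    by_cases hiA : a i = s.sup' hs a
    · have hbi : b i ≤ b j := hbj ▸ A.le_sup' b (Finset.mem_filter.2 ⟨hi, hiA⟩)
      filter_upwards [self_mem_nhdsWithin] with t (ht : 0 < t)
      nlinarith
    · have hlt : a i + 0 * (b i - b j) < s.sup' hs a := by
        rw [zero_mul, add_zero]; exact lt_of_le_of_ne (s.le_sup' a hi) hiA
      have hcont : Continuous fun t : ℝ => a i + t * (b i - b j) := by fun_prop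
      filter_upwards [nhdsWithin_le_nhds
        (hcont.continuousAt.eventually_lt continuousAt_const hlt)] with t ht
      linarith
  filter_upwards [(Filter.eventually_all_finset s).2 hle] with t ht
  refine le_antisymm (Finset.sup'_le _ _ ht) ?_
  rw [← haj]
  exact s.le_sup' (fun i => a i + t * b i) hjs

lemma nonneg_of_eventually_nonneg_mul_add_mul_sq {a b : ℝ}
    (h : ∀ᶠ t in 𝓝[>] (0 : ℝ), 0 ≤ a * t + b * t ^ 2) : 0 ≤ a := by
  have hlin : ∀ᶠ t in 𝓝[>] (0 : ℝ), 0 ≤ a + b * t := by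
    filter_upwards [h, self_mem_nhdsWithin] with t ht (htpos : 0 < t)
    exact nonneg_of_mul_nonneg_left (by nlinarith) htpos
  have hlim : Tendsto (fun t : ℝ => a + b * t) (𝓝[>] 0) (𝓝 a) :=
    tendsto_nhdsWithin_of_tendsto_nhds (by simpa using (by fun_prop :
      Continuous fun t : ℝ => a + b * t).tendsto 0)
  exact ge_of_tendsto hlim hlin

lemma dotProduct_eq_apply_single {V : Type*} [Fintype V] [DecidableEq V]
    (φ : (V → ℝ) →L[ℝ] ℝ) (q : V → ℝ) : φ q = q ⬝ᵥ fun z => φ (Pi.single z 1) := by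
  rw [← φ.coe_coe, φ.toLinearMap.pi_apply_eq_sum_univ q, dotProduct]
  refine Finset.sum_congr rfl fun z _ => ?_
  rw [smul_eq_mul]
  congr 2
  ext j
  simp [Pi.single_apply, eq_comm]

open scoped Pointwise in
lemma exists_eq_sum_smul_of_forall_dotProduct_le {V ι : Type*} [Fintype V] [DecidableEq V]
    (s : Finset ι) (c : ι → ℝ) (A : ι → Finset (V → ℝ)) (p : V → ℝ)
    (h : ∀ v : V → ℝ, ∃ b : ι → V → ℝ, (∀ i ∈ s, b i ∈ A i) ∧
      p ⬝ᵥ v ≤ (∑ i ∈ s, c i • b i) ⬝ᵥ v) :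
    ∃ b : ι → V → ℝ, (∀ i ∈ s, b i ∈ convexHull ℝ (A i : Set (V → ℝ))) ∧
      p = ∑ i ∈ s, c i • b i := by
  set K : Set (V → ℝ) := ∑ i ∈ s, c i • convexHull ℝ (A i : Set (V → ℝ))
  have hK : K = convexHull ℝ ↑(∑ i ∈ s, c i • A i) := by
    simp only [K, Finset.coe_sum, Finset.coe_smul_finset, convexHull_sum, convexHull_smul]
  have hsum_mem : ∀ b : ι → V → ℝ, (∀ i ∈ s, b i ∈ convexHull ℝ (A i : Set (V → ℝ))) →
      ∑ i ∈ s, c i • b i ∈ K := fun b hb =>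
    (Set.mem_finsetSum _ _ _).2 ⟨fun i => c i • b i, fun hi => Set.smul_mem_smul_set (hb _ hi), rfl⟩
  have hKc : IsClosed K :=
    hK ▸ ((Finset.finite_toSet _).isCompact_convexHull (𝕜 := ℝ)).isClosed
  have hpK : p ∈ K := by
    by_contra hp
    obtain ⟨φ, r, hφK, hφp⟩ :=
      geometric_hahn_banach_closed_point (hK ▸ convex_convexHull ℝ _) hKc hp
    obtain ⟨b, hbA, hpb⟩ := h fun z => φ (Pi.single z 1)
    have hb := hφK _ (hsum_mem b fun i hi => subset_convexHull ℝ _ (hbA i hi))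
    rw [← dotProduct_eq_apply_single, ← dotProduct_eq_apply_single] at hpb
    linarith
  obtain ⟨g, hg, rfl⟩ := (Set.mem_finsetSum _ _ _).1 hpK
  choose! b hb hbg using fun i (hi : i ∈ s) => Set.mem_smul_set.1 (hg hi)
  exact ⟨b, hb, Finset.sum_congr rfl fun i hi => (hbg i hi).symm⟩

namespace HypRicci

variable {V : Type*}

def spread (e : Finset V) (u : V → ℝ) : ℝ :=
  if he : e.Nonempty then (e ×ˢ e).sup' (he.product he) fun p => u p.1 - u p.2 else 0

lemma sub_le_spread {e : Finset V} {x y : V} (hx : x ∈ e) (hy : y ∈ e) (u : V → ℝ) :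
    u x - u y ≤ spread e u := by
  rw [spread, dif_pos ⟨x, hx⟩]
  exact Finset.le_sup' (fun p : V × V => u p.1 - u p.2) (Finset.mk_mem_product hx hy)

lemma exists_sub_eq_spread {e : Finset V} (he : e.Nonempty) (u : V → ℝ) :
    ∃ x ∈ e, ∃ y ∈ e, u x - u y = spread e u := by
  rw [spread, dif_pos he]
  obtain ⟨p, hp, hpu⟩ := (e ×ˢ e).exists_mem_eq_sup' (he.product he) fun p => u p.1 - u p.2
  exact ⟨p.1, (Finset.mem_product.1 hp).1, p.2, (Finset.mem_product.1 hp).2, hpu.symm⟩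

lemma continuous_spread (e : Finset V) : Continuous (spread e) := by
  by_cases he : e.Nonempty
  · show Continuous fun u => spread e u
    simp only [spread, dif_pos he]
    exact Continuous.finset_sup'_apply _ fun p _ => by fun_prop
  · show Continuous fun u => spread e u
    simp only [spread, dif_neg he]
    exact continuous_const

lemma dot_eq_dotProduct [Fintype V] (u v : V → ℝ) : dot u v = u ⬝ᵥ v := rfl

lemma isLinearMap_dot [Fintype V] (u : V → ℝ) : IsLinearMap ℝ fun b : V → ℝ => dot b u :=
  ⟨fun b b' => add_dotProduct b b' u, fun t b => smul_dotProduct t b u⟩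

section DecidableEq

variable [DecidableEq V]

lemma delta_sub_delta_mem_Bp {e : Finset V} {x y : V} (hx : x ∈ e) (hy : y ∈ e) :
    delta x - delta y ∈ Bp e :=
  subset_convexHull ℝ _ ⟨x, hx, y, hy, rfl⟩

lemma zero_mem_Bp {e : Finset V} (he : e.Nonempty) : (0 : V → ℝ) ∈ Bp e := by
  obtain ⟨x, hx⟩ := he
  simpa using delta_sub_delta_mem_Bp hx hx

lemma abs_apply_le_of_mem_Bp {e : Finset V} {b : V → ℝ} (hb : b ∈ Bp e) (z : V) :
    |b z| ≤ if z ∈ e then 1 else 0 := by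
  set c : ℝ := if z ∈ e then 1 else 0
  have hconv : Convex ℝ {b : V → ℝ | |b z| ≤ c} := by
    have hlin : IsLinearMap ℝ fun b : V → ℝ => b z := ⟨fun _ _ => rfl, fun _ _ => rfl⟩
    have hset : {b : V → ℝ | |b z| ≤ c} = {b | -c ≤ b z} ∩ {b | b z ≤ c} := by
      ext b
      simp [abs_le]
    rw [hset]
    exact (convex_halfSpace_ge hlin (-c)).inter (convex_halfSpace_le hlin c)
  refine convexHull_min (t := {b | |b z| ≤ c}) ?_ hconv hb
  rintro _ ⟨x, hx, y, hy, rfl⟩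
  show |delta x z - delta y z| ≤ c
  rw [delta, delta]
  by_cases hz : z ∈ e <;> simp only [c, hz] <;> split_ifs <;> simp_all

end DecidableEq

section Fintype

variable [Fintype V] [DecidableEq V]

lemma dot_delta_sub_delta (x y : V) (u : V → ℝ) : dot (delta x - delta y) u = u x - u y := by
  simp [dot, delta, sub_mul, Finset.sum_sub_distrib, ite_mul]

lemma dot_le_of_mem_Bp {e : Finset V} {u : V → ℝ} {c : ℝ}
    (hc : ∀ x ∈ e, ∀ y ∈ e, u x - u y ≤ c) {b : V → ℝ} (hb : b ∈ Bp e) : dot b u ≤ c := by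
  refine convexHull_min (t := {b | dot b u ≤ c}) ?_ (convex_halfSpace_le (isLinearMap_dot u) c) hb
  rintro _ ⟨x, hx, y, hy, rfl⟩
  simpa [dot_delta_sub_delta] using hc x hx y hy

lemma dot_le_spread {e : Finset V} {u b : V → ℝ} (hb : b ∈ Bp e) : dot b u ≤ spread e u :=
  dot_le_of_mem_Bp (fun _ hx _ hy => sub_le_spread hx hy u) hb

def activeGens (e : Finset V) (u : V → ℝ) : Finset (V → ℝ) :=
  ((e ×ˢ e).filter fun p => u p.1 - u p.2 = spread e u).image fun p => delta p.1 - delta p.2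

lemma convexHull_activeGens_subset_Bp (e : Finset V) (u : V → ℝ) :
    convexHull ℝ ↑(activeGens e u) ⊆ Bp e := by
  refine convexHull_mono fun b hb => ?_
  obtain ⟨p, hp, rfl⟩ := Finset.mem_image.1 hb
  obtain ⟨hp1, hp2⟩ := Finset.mem_product.1 (Finset.mem_filter.1 hp).1
  exact ⟨p.1, hp1, p.2, hp2, rfl⟩

lemma dot_eq_spread_of_mem_convexHull_activeGens {e : Finset V} {u b : V → ℝ}
    (hb : b ∈ convexHull ℝ ↑(activeGens e u)) : dot b u = spread e u := by
  refine convexHull_min (t := {b | dot b u = spread e u}) ?_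
    (convex_hyperplane (isLinearMap_dot u) _) hb
  intro b hb
  obtain ⟨p, hp, rfl⟩ := Finset.mem_image.1 hb
  exact (dot_delta_sub_delta _ _ _).trans (Finset.mem_filter.1 hp).2

lemma exists_eventually_spread_add_smul {e : Finset V} (he : e.Nonempty) (u v : V → ℝ) :
    ∃ b ∈ activeGens e u,
      ∀ᶠ t in 𝓝[>] (0 : ℝ), spread e (u + t • v) = spread e u + t * dot b v := by
  obtain ⟨p, hp, hpu, hev⟩ := Finset.exists_eventually_sup'_add_mul (he.product he)
    (fun p : V × V => u p.1 - u p.2) (fun p => v p.1 - v p.2)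
  have hpu' : u p.1 - u p.2 = spread e u := by rw [spread, dif_pos he, hpu]
  refine ⟨_, Finset.mem_image_of_mem _ (Finset.mem_filter.2 ⟨hp, hpu'⟩), ?_⟩
  filter_upwards [hev] with t ht
  simp only [spread, dif_pos he, Pi.add_apply, Pi.smul_apply, smul_eq_mul, dot_delta_sub_delta,
    ← ht]
  congr 1
  ext q
  ring

variable (H : Hypergraph V)

lemma exists_mem_Lap (u : V → ℝ) : ∃ h, h ∈ Lap H u := by
  have hex : ∀ e ∈ H.E, ∃ b ∈ Bp e, dot b u = spread e u := fun e he => by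
    obtain ⟨x, hx, y, hy, hxy⟩ := exists_sub_eq_spread (H.e_nonempty e he) u
    exact ⟨_, delta_sub_delta_mem_Bp hx hy, by rw [dot_delta_sub_delta, hxy]⟩
  choose! b hbB hbu using hex
  refine ⟨_, b, fun e he => ⟨hbB e he, fun b' hb' => ?_⟩, rfl⟩
  rw [hbu e he]
  exact dot_le_spread hb'

lemma zero_mem_Lap_zero : (0 : V → ℝ) ∈ Lap H 0 :=
  ⟨fun _ => 0, fun e he => ⟨zero_mem_Bp (H.e_nonempty e he), fun _ _ => by simp [dot]⟩,
    by simp⟩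

variable {H}

lemma dot_sub_nonneg_of_mem_Lap {u u' h h' : V → ℝ} (hh : h ∈ Lap H u) (hh' : h' ∈ Lap H u') :
    0 ≤ dot (h - h') (u - u') := by
  obtain ⟨b, hb, rfl⟩ := hh
  obtain ⟨b', hb', rfl⟩ := hh'
  simp only [dot_eq_dotProduct, sub_dotProduct, dotProduct_sub, sum_dotProduct,
    smul_dotProduct, smul_eq_mul, ← Finset.sum_sub_distrib]
  refine Finset.sum_nonneg fun e he => ?_
  obtain ⟨hbB, hbmax⟩ := hb e he
  obtain ⟨hbB', hbmax'⟩ := hb' e he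
  have hw := (H.w_pos e he).le
  have h0 := zero_mem_Bp (H.e_nonempty e he)
  have ha : 0 ≤ dot (b e) u := by simpa [dot] using hbmax 0 h0
  have ha' : 0 ≤ dot (b' e) u' := by simpa [dot] using hbmax' 0 h0
  simp only [dot_eq_dotProduct] at *
  -- with `a = b e ⬝ᵥ u`, `a' = b' e ⬝ᵥ u'` the summand is
  -- `w (a - a')² + w a (a' - b e ⬝ᵥ u') + w a' (a - b' e ⬝ᵥ u)`
  nlinarith [mul_nonneg hw (sq_nonneg ((b e) ⬝ᵥ u - (b' e) ⬝ᵥ u')),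
    mul_nonneg (mul_nonneg hw ha) (sub_nonneg.2 (hbmax' _ hbB)),
    mul_nonneg (mul_nonneg hw ha') (sub_nonneg.2 (hbmax _ hbB'))]

lemma abs_le_deg_of_mem_Lap {u h : V → ℝ} (hu : ∀ e ∈ H.E, ∀ x ∈ e, ∀ y ∈ e, u x - u y ≤ 1)
    (hh : h ∈ Lap H u) (z : V) : |h z| ≤ deg H z := by
  obtain ⟨b, hb, rfl⟩ := hh
  simp only [Finset.sum_apply, Pi.smul_apply, smul_eq_mul]
  refine (Finset.abs_sum_le_sum_abs _ _).trans (Finset.sum_le_sum fun e he => ?_)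
  obtain ⟨hbB, hbmax⟩ := hb e he
  have hw := (H.w_pos e he).le
  have ha : 0 ≤ dot (b e) u := by simpa [dot] using hbmax 0 (zero_mem_Bp (H.e_nonempty e he))
  have ha1 : dot (b e) u ≤ 1 := dot_le_of_mem_Bp (hu e he) hbB
  have hbz := abs_apply_le_of_mem_Bp hbB z
  rw [abs_mul, abs_mul, abs_of_nonneg hw, abs_of_nonneg ha]
  split_ifs at hbz ⊢ with hz
  · calc H.w e * dot (b e) u * |b e z| ≤ H.w e * 1 * 1 := by gcongr
      _ = H.w e := by ring
  · simp [abs_nonpos_iff.1 hbz]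

variable (H) in
def lapEnergy (d a u : V → ℝ) : ℝ :=
  ∑ z, d z * (u z - a z) ^ 2 + ∑ e ∈ H.E, H.w e * spread e u ^ 2

lemma exists_forall_lapEnergy_le {d : V → ℝ} (hd : ∀ z, 0 < d z) (a : V → ℝ) :
    ∃ u, ∀ u', lapEnergy H d a u ≤ lapEnergy H d a u' := by
  have hcont : Continuous (lapEnergy H d a) :=
    (continuous_finsetSum _ fun z _ => by fun_prop).add
      (continuous_finsetSum _ fun e _ => continuous_const.mul ((continuous_spread e).pow 2))
  have hcoord : ∀ u z, d z * (u z - a z) ^ 2 ≤ lapEnergy H d a u := fun u z =>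
    le_add_of_le_of_nonneg
      (Finset.single_le_sum (f := fun z => d z * (u z - a z) ^ 2)
        (fun z _ => mul_nonneg (hd z).le (sq_nonneg _)) (Finset.mem_univ z))
      (Finset.sum_nonneg fun e he => mul_nonneg (H.w_pos e he).le (sq_nonneg _))
  -- off the box `∏ z, [a z - r z, a z + r z]` a single term of `lapEnergy u` exceeds `lapEnergy a`
  set r : V → ℝ := fun z => √(lapEnergy H d a a / d z)
  refine hcont.exists_forall_le' a ?_
  filter_upwards [(isCompact_univ_pi fun z => isCompact_Icc (a := a z - r z)
    (b := a z + r z)).compl_mem_cocompact] with u hu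
  rw [Set.mem_compl_iff, Set.mem_univ_pi, not_forall] at hu
  obtain ⟨z, hz⟩ := hu
  have hrz : r z < |u z - a z| := by
    rw [Set.mem_Icc, not_and_or, not_le, not_le] at hz
    rcases hz with hz | hz
    · rw [abs_of_neg (by linarith [Real.sqrt_nonneg (lapEnergy H d a a / d z)])]; linarith
    · rw [abs_of_pos (by linarith [Real.sqrt_nonneg (lapEnergy H d a a / d z)])]; linarith
  have := Real.lt_sq_of_sqrt_lt hrz
  rw [sq_abs, div_lt_iff₀' (hd z)] at this
  exact this.le.trans (hcoord u z)

lemma exists_activeGens_of_forall_lapEnergy_le {d a u : V → ℝ}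
    (hmin : ∀ u', lapEnergy H d a u ≤ lapEnergy H d a u') (v : V → ℝ) :
    ∃ b : Finset V → V → ℝ, (∀ e ∈ H.E, b e ∈ activeGens e u) ∧
      (d * (a - u)) ⬝ᵥ v ≤ (∑ e ∈ H.E, (H.w e * spread e u) • b e) ⬝ᵥ v := by
  choose! b hb hev using fun e (he : e ∈ H.E) =>
    exists_eventually_spread_add_smul (H.e_nonempty e he) u v
  refine ⟨b, hb, ?_⟩
  set X := ∑ z, d z * (u z - a z) * v z + ∑ e ∈ H.E, H.w e * spread e u * dot (b e) v
  set Y := ∑ z, d z * v z ^ 2 + ∑ e ∈ H.E, H.w e * dot (b e) v ^ 2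
  have hX : 0 ≤ 2 * X := by
    refine nonneg_of_eventually_nonneg_mul_add_mul_sq (b := Y) ?_
    filter_upwards [(Filter.eventually_all_finset H.E).2 hev] with t ht
    have hquad : ∑ z, d z * ((u + t • v) z - a z) ^ 2
        = ∑ z, d z * (u z - a z) ^ 2 + 2 * t * ∑ z, d z * (u z - a z) * v z
          + t ^ 2 * ∑ z, d z * v z ^ 2 := by
      simp only [Pi.add_apply, Pi.smul_apply, smul_eq_mul, Finset.mul_sum,
        ← Finset.sum_add_distrib]
      exact Finset.sum_congr rfl fun z _ => by ring
    have hspread : ∑ e ∈ H.E, H.w e * spread e (u + t • v) ^ 2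
        = ∑ e ∈ H.E, H.w e * spread e u ^ 2 + 2 * t * ∑ e ∈ H.E, H.w e * spread e u * dot (b e) v
          + t ^ 2 * ∑ e ∈ H.E, H.w e * dot (b e) v ^ 2 := by
      simp only [Finset.mul_sum, ← Finset.sum_add_distrib]
      exact Finset.sum_congr rfl fun e he => by rw [ht e he]; ring
    have := hmin (u + t • v)
    simp only [lapEnergy, hquad, hspread] at this
    linarith
  have hlhs : (d * (a - u)) ⬝ᵥ v = -∑ z, d z * (u z - a z) * v z := by
    simp only [dotProduct, Pi.mul_apply, Pi.sub_apply, ← Finset.sum_neg_distrib]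
    exact Finset.sum_congr rfl fun z _ => by ring
  have hrhs : (∑ e ∈ H.E, (H.w e * spread e u) • b e) ⬝ᵥ v
      = ∑ e ∈ H.E, H.w e * spread e u * dot (b e) v := by
    simp only [sum_dotProduct, smul_dotProduct, smul_eq_mul, dot_eq_dotProduct]
  rw [hlhs, hrhs]
  linarith

variable (H) in
theorem exists_mul_sub_mem_Lap {d : V → ℝ} (hd : ∀ z, 0 < d z) (a : V → ℝ) :
    ∃ u, d * (a - u) ∈ Lap H u := by
  obtain ⟨u, hmin⟩ := exists_forall_lapEnergy_le hd a
  obtain ⟨b, hb, hsum⟩ := exists_eq_sum_smul_of_forall_dotProduct_le H.E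
    (fun e => H.w e * spread e u) (fun e => activeGens e u) (d * (a - u)) fun v =>
      exists_activeGens_of_forall_lapEnergy_le hmin v
  have hbu : ∀ e ∈ H.E, dot (b e) u = spread e u := fun e he =>
    dot_eq_spread_of_mem_convexHull_activeGens (hb e he)
  refine ⟨u, b, fun e he => ⟨convexHull_activeGens_subset_Bp e u (hb e he), fun b' hb' => ?_⟩, ?_⟩
  · rw [hbu e he]
    exact dot_le_spread hb'
  · rw [hsum]
    exact Finset.sum_congr rfl fun e he => by rw [hbu e he]

lemma inn_comm (f g : V → ℝ) : inn H f g = inn H g f :=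
  Finset.sum_congr rfl fun _ _ => by ring

lemma inn_sub_left (f f' g : V → ℝ) : inn H (f - f') g = inn H f g - inn H f' g := by
  simp only [inn, Pi.sub_apply, ← Finset.sum_sub_distrib]
  exact Finset.sum_congr rfl fun _ _ => by ring

lemma inn_smul_left (c : ℝ) (f g : V → ℝ) : inn H (c • f) g = c * inn H f g := by
  simp only [inn, Pi.smul_apply, smul_eq_mul, Finset.mul_sum]
  exact Finset.sum_congr rfl fun _ _ => by ring

lemma inn_sub_right (f g g' : V → ℝ) : inn H f (g - g') = inn H f g - inn H f g' := by
  rw [inn_comm, inn_sub_left, inn_comm g, inn_comm g']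

lemma inn_smul_right (c : ℝ) (f g : V → ℝ) : inn H f (c • g) = c * inn H f g := by
  rw [inn_comm, inn_smul_left, inn_comm g]

lemma inn_eq_dot_Dinv (f g : V → ℝ) : inn H f g = dot f (Dinv H g) :=
  Finset.sum_congr rfl fun _ _ => mul_div_assoc _ _ _

lemma inn_delta_sub_delta (f : V → ℝ) (x y : V) :
    inn H f (delta x - delta y) = f x / deg H x - f y / deg H y := by
  rw [inn_comm, inn_eq_dot_Dinv, dot_delta_sub_delta, Dinv, Dinv]

lemma Dinv_sub (f g : V → ℝ) : Dinv H (f - g) = Dinv H f - Dinv H g :=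
  funext fun _ => sub_div _ _ _

lemma inn_sub_nonneg_of_mem_NL {g g' h h' : V → ℝ} (hh : h ∈ NL H g) (hh' : h' ∈ NL H g') :
    0 ≤ inn H (h - h') (g - g') := by
  rw [inn_eq_dot_Dinv, Dinv_sub]
  exact dot_sub_nonneg_of_mem_Lap hh hh'

section PositiveDegrees

variable (hdeg : ∀ x, 0 < deg H x)
include hdeg

lemma sq_div_deg_le_inn_self (f : V → ℝ) (z : V) : f z ^ 2 / deg H z ≤ inn H f f := by
  simp only [inn, ← sq]
  exact Finset.single_le_sum (f := fun z => f z ^ 2 / deg H z)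
    (fun z _ => div_nonneg (sq_nonneg _) (hdeg z).le) (Finset.mem_univ z)

lemma inn_self_nonneg (f : V → ℝ) : 0 ≤ inn H f f :=
  Finset.sum_nonneg fun z _ => div_nonneg (mul_self_nonneg _) (hdeg z).le

lemma eq_zero_of_inn_self_nonpos {f : V → ℝ} (hf : inn H f f ≤ 0) : f = 0 := by
  funext z
  have hsq := (div_le_iff₀ (hdeg z)).1 ((sq_div_deg_le_inn_self hdeg f z).trans hf)
  rw [zero_mul] at hsq
  exact pow_eq_zero_iff two_ne_zero |>.1 (le_antisymm hsq (sq_nonneg _))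

lemma inn_self_le_vol {f : V → ℝ} (hf : ∀ z, |f z| ≤ deg H z) : inn H f f ≤ vol H := by
  refine Finset.sum_le_sum fun z _ => ?_
  rw [div_le_iff₀ (hdeg z), ← sq, ← sq_abs]
  nlinarith [hf z, abs_nonneg (f z)]

lemma abs_div_deg_le (f : V → ℝ) (z : V) :
    |f z / deg H z| ≤ √(inn H f f) * (1 / √(deg H z)) := by
  have hd := hdeg z
  calc |f z / deg H z| = √(f z ^ 2 / deg H z) * (1 / √(deg H z)) := by
        rw [Real.sqrt_div' _ hd.le, Real.sqrt_sq_eq_abs, abs_div, abs_of_pos hd,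
          div_mul_div_comm, mul_one, Real.mul_self_sqrt hd.le]
    _ ≤ √(inn H f f) * (1 / √(deg H z)) := by
        gcongr
        exact sq_div_deg_le_inn_self hdeg f z

end PositiveDegrees

section Resolvent

variable (hdeg : ∀ x, 0 < deg H x) {l : ℝ} (hl : 0 < l)
include hdeg hl

lemma exists_mem_NL_add_smul_eq (f : V → ℝ) : ∃ g, ∃ h ∈ NL H g, f = g + l • h := by
  obtain ⟨u, hu⟩ := exists_mul_sub_mem_Lap H (d := l⁻¹ • deg H)
    (fun z => mul_pos (inv_pos.2 hl) (hdeg z)) (Dinv H f)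
  have hDinv : Dinv H (fun z => deg H z * u z) = u :=
    funext fun z => mul_div_cancel_left₀ _ (hdeg z).ne'
  -- `g = D u` and `h = λ⁻¹ D (D⁻¹ f - u) ∈ L u = 𝓛 g`
  refine ⟨fun z => deg H z * u z, _, by rwa [NL, hDinv], funext fun z => ?_⟩
  simp only [Pi.add_apply, Pi.smul_apply, Pi.mul_apply, Pi.sub_apply, smul_eq_mul, Dinv]
  field_simp [(hdeg z).ne', hl.ne']
  ring

lemma resolvent_eq {f g h : V → ℝ} (hh : h ∈ NL H g) (hf : f = g + l • h) :
    Resolvent H l f = g := by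
  obtain ⟨h', hh', hf'⟩ : ∃ h' ∈ NL H (Resolvent H l f), f = Resolvent H l f + l • h' :=
    Classical.epsilon_spec (p := fun g => ∃ h ∈ NL H g, f = g + l • h) ⟨g, h, hh, hf⟩
  have hdiff : Resolvent H l f - g = (-l) • (h' - h) := by
    ext z
    have := congrFun (hf.symm.trans hf') z
    simp only [Pi.add_apply, Pi.sub_apply, Pi.smul_apply, smul_eq_mul] at this ⊢
    linarith
  have hmono := inn_sub_nonneg_of_mem_NL hh' hh
  rw [hdiff, inn_smul_right] at hmono
  have hzero := eq_zero_of_inn_self_nonpos hdeg (nonpos_of_mul_nonneg_right hmono (by linarith))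
  rwa [hzero, smul_zero, sub_eq_zero] at hdiff

lemma inn_self_le_of_mem_NL {f g h h₀ : V → ℝ} (hh : h ∈ NL H g) (hf : f = g + l • h)
    (hh₀ : h₀ ∈ NL H f) : inn H h h ≤ inn H h₀ h₀ := by
  have hmono := inn_sub_nonneg_of_mem_NL hh hh₀
  rw [hf, sub_add_cancel_left, ← neg_smul, inn_smul_right] at hmono
  have hA : inn H (h - h₀) h ≤ 0 := nonpos_of_mul_nonneg_right hmono (by linarith)
  have hsq := inn_self_nonneg hdeg (h - h₀)
  rw [inn_sub_right, inn_sub_left, inn_sub_left, inn_comm h h₀] at hsq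
  rw [inn_sub_left] at hA
  linarith

lemma resolvent_zero : Resolvent H l 0 = 0 :=
  resolvent_eq hdeg hl (h := 0)
    (by rw [NL, show Dinv H 0 = 0 from funext fun _ => zero_div _]; exact zero_mem_Lap_zero H)
    (by simp)

end Resolvent

lemma gdist_le_one {e : Finset V} (he : e ∈ H.E) {x y : V} (hx : x ∈ e) (hy : y ∈ e) :
    gdist H x y ≤ 1 := by
  have hchain : chainProp H x y 1 :=
    ⟨fun i => if i = 0 then x else y, rfl, rfl, fun i hi => by
      obtain rfl : i = 0 := Nat.lt_one_iff.1 hi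
      exact ⟨e, he, hx, hy⟩⟩
  have : hdistN H x y ≤ 1 := Nat.sInf_le hchain
  rw [gdist]
  exact_mod_cast this

lemma zero_mem_Lip1 : (0 : V → ℝ) ∈ Lip1 H := fun x y => by
  simp [inn, gdist]

lemma Dinv_sub_le_one_of_mem_Lip1 {f : V → ℝ} (hf : f ∈ Lip1 H) :
    ∀ e ∈ H.E, ∀ x ∈ e, ∀ y ∈ e, Dinv H f x - Dinv H f y ≤ 1 := fun _ he x hx y hy =>
  (inn_delta_sub_delta f x y).symm.trans_le ((hf x y).trans (gdist_le_one he hx hy))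

lemma inn_resolvent_delta_sub_delta_le (hdeg : ∀ x, 0 < deg H x) {l : ℝ} (hl : 0 < l)
    {f : V → ℝ} (hf : f ∈ Lip1 H) (x y : V) :
    inn H (Resolvent H l f) (delta x - delta y)
      ≤ 2 * l * √(vol H) * (⨆ z : V, 1 / √(deg H z)) + gdist H x y := by
  obtain ⟨g, h, hh, hfg⟩ := exists_mem_NL_add_smul_eq hdeg hl f
  obtain ⟨h₀, hh₀⟩ := exists_mem_Lap H (Dinv H f)
  have hnorm : inn H h h ≤ vol H := (inn_self_le_of_mem_NL hdeg hl hh hfg hh₀).trans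
    (inn_self_le_vol hdeg (abs_le_deg_of_mem_Lap (Dinv_sub_le_one_of_mem_Lip1 hf) hh₀))
  have hpt : ∀ z, |h z / deg H z| ≤ √(vol H) * ⨆ z : V, 1 / √(deg H z) := fun z =>
    (abs_div_deg_le hdeg h z).trans <| mul_le_mul (Real.sqrt_le_sqrt hnorm)
      (le_ciSup (f := fun z => 1 / √(deg H z)) (Set.finite_range _).bddAbove z)
      (by positivity) (Real.sqrt_nonneg _)
  rw [resolvent_eq hdeg hl hh hfg, eq_sub_of_add_eq hfg.symm, inn_sub_left, inn_smul_left,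
    inn_delta_sub_delta h]
  have hx := (abs_le.1 (hpt x)).1
  have hy := (abs_le.1 (hpt y)).2
  nlinarith [hf x y]

end Fintype

variable [Fintype V] [DecidableEq V]

theorem stmt8_general (H : Hypergraph V)
    (hdeg : ∀ x : V, 0 < deg H x) (l : ℝ) (hl : 0 < l) (x y : V) :
    0 ≤ KD H l x y ∧
    KD H l x y ≤
      2 * l * Real.sqrt (vol H) * (⨆ z : V, 1 / Real.sqrt (deg H z)) + gdist H x y := by
  have hbound : ∀ r ∈ {r | ∃ f ∈ Lip1 H, r = inn H (Resolvent H l f) (delta x - delta y)},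
      r ≤ 2 * l * √(vol H) * (⨆ z : V, 1 / √(deg H z)) + gdist H x y := by
    rintro r ⟨f, hf, rfl⟩
    exact inn_resolvent_delta_sub_delta_le hdeg hl hf x y
  have hmem : (0 : ℝ) ∈ {r | ∃ f ∈ Lip1 H, r = inn H (Resolvent H l f) (delta x - delta y)} :=
    ⟨0, zero_mem_Lip1, by simp [resolvent_zero hdeg hl, inn]⟩
  exact ⟨le_csSup ⟨_, hbound⟩ hmem, csSup_le ⟨0, hmem⟩ hbound⟩

/-- with `M = max_x d_x^{-1/2}`,
`0 ≤ KD_λ(x,y) ≤ 2λ vol(V)^{1/2} M + d(x,y)`. -/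
theorem stmt8 [Nonempty V] (H : Hypergraph V) (hconn : Connected H)
    (hdeg : ∀ x : V, 0 < deg H x) (l : ℝ) (hl : 0 < l) (x y : V) :
    0 ≤ KD H l x y ∧
    KD H l x y ≤
      2 * l * Real.sqrt (vol H) * (⨆ z : V, 1 / Real.sqrt (deg H z)) + gdist H x y :=
  stmt8_general H hdeg l hl x y

end HypRicci
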